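/- Let Φ be of type G₂ and P_k Kostant's partition function. Let λ = aω₁ + bω₂ with a ≥ 6 and 0 ≤ b ≤ 2. Then for all k ≤ a + b − 2, P_k(s₁·λ − ω₁) = P_k(s₁s₂·λ − ω₁). -/
import Mathlib


noncomputable section

/-- the weight space of `G₂`, in coordinates with respect to the simple roots `α₁, α₂`
(`α₁` short) -/
abbrev VG := Fin 2 → ℚ

/-- The six positive roots of `G₂`: `α₁, α₂, α₁+α₂, 2α₁+α₂, 3α₁+α₂, 3α₁+2α₂`. -/
def posG : Finset VG := {![1, 0], ![0, 1], ![1, 1], ![2, 1], ![3, 1], ![3, 2]}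

/-- Kostant's partition function: the number of ways (as unordered multisets) to write `ν`
as a sum of exactly `k` positive roots. -/
def PG (k : ℕ) (ν : VG) : ℕ :=
  Set.ncard {m : Multiset VG | Multiset.card m = k ∧ (∀ x ∈ m, x ∈ posG) ∧ m.sum = ν}

/-- the Cartan matrix of `G₂` (`α₁` short); the `(i,j)` entry is `⟨α_j, α_i^∨⟩` -/
def CG : Matrix (Fin 2) (Fin 2) ℚ := !![2, -3; -1, 2]

/-- the simple reflection `s_i` acting on the weight space:
`s_i(x) = x - ⟨x, α_i^∨⟩ α_i` -/
def sG (i : Fin 2) : VG → VG := fun x => x - (∑ j, x j * CG i j) • (Pi.single i 1 : VG)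

/-- the fundamental weight `ω₁ = 2α₁ + α₂` -/
def ω₁G : VG := ![2, 1]

/-- the fundamental weight `ω₂ = 3α₁ + 2α₂` -/
def ω₂G : VG := ![3, 2]

/-- the half-sum `ρ` of the positive roots -/
def ρG : VG := (2 : ℚ)⁻¹ • ∑ α ∈ posG, α

def r1 : VG := ![1, 0]
def r2 : VG := ![0, 1]
def r3 : VG := ![1, 1]
def r4 : VG := ![2, 1]
def r5 : VG := ![3, 1]
def r6 : VG := ![3, 2]

lemma mem_posG_iff (x : VG) :
    x ∈ posG ↔ x = r1 ∨ x = r2 ∨ x = r3 ∨ x = r4 ∨ x = r5 ∨ x = r6 := by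
  simp [posG, r1, r2, r3, r4, r5, r6]

lemma r2_mem : r2 ∈ posG := by simp [mem_posG_iff]
lemma r6_mem : r6 ∈ posG := by simp [mem_posG_iff]

lemma count_data (m : Multiset VG) (h : ∀ x ∈ m, x ∈ posG) :
    m.sum 0 = ((m.count r1 + m.count r3 + 2 * m.count r4 + 3 * m.count r5
        + 3 * m.count r6 : ℕ) : ℚ) ∧
    m.sum 1 = ((m.count r2 + m.count r3 + m.count r4 + m.count r5
        + 2 * m.count r6 : ℕ) : ℚ) ∧
    Multiset.card m
      = m.count r1 + m.count r2 + m.count r3 + m.count r4 + m.count r5 + m.count r6 := by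
  induction m using Multiset.induction with
  | empty => simp
  | cons y m ih =>
    have hy := (mem_posG_iff y).1 (h y (Multiset.mem_cons_self y m))
    obtain ⟨i1, i2, i3⟩ := ih fun x hx => h x (Multiset.mem_cons_of_mem hx)
    rcases hy with rfl | rfl | rfl | rfl | rfl | rfl <;>
      · simp only [Multiset.sum_cons, Multiset.count_cons, Multiset.card_cons, Pi.add_apply]
        norm_num [r1, r2, r3, r4, r5, r6, funext_iff, Fin.forall_fin_two, i1, i2, i3]
        and_intros <;> ring

lemma rho_eq : ρG = ![5, 3] := by
  funext i
  fin_cases i <;>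
    norm_num [ρG, posG, Finset.sum_insert, Finset.mem_insert, Finset.mem_singleton,
      funext_iff, Fin.forall_fin_two]

/-- For a weight with nonnegative-integer coordinates, given the data of all solution counts,
the two Kostant counts agree. -/
lemma PG_shift (a b k : ℕ) (hk : (k : ℤ) ≤ (a : ℤ) + (b : ℤ) - 2) :
    PG k ![(a : ℚ) + 3 * b - 3, (a : ℚ) + 2 * b - 1]
      = PG k ![(a : ℚ) - 6, (a : ℚ) + b - 2] := by
  classical
  set ν₁ : VG := ![(a : ℚ) + 3 * b - 3, (a : ℚ) + 2 * b - 1] with hν₁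
  set ν₂ : VG := ![(a : ℚ) - 6, (a : ℚ) + b - 2] with hν₂
  set A : Set (Multiset VG) :=
    {m | Multiset.card m = k ∧ (∀ x ∈ m, x ∈ posG) ∧ m.sum = ν₁} with hA
  set B : Set (Multiset VG) :=
    {m | Multiset.card m = k ∧ (∀ x ∈ m, x ∈ posG) ∧ m.sum = ν₂} with hB
  set f : Multiset VG → Multiset VG :=
    fun m => m - Multiset.replicate (b + 1) r6 + Multiset.replicate (b + 1) r2 with hf
  set g : Multiset VG → Multiset VG :=
    fun m => m - Multiset.replicate (b + 1) r2 + Multiset.replicate (b + 1) r6 with hg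
  -- forward direction
  have fwd : ∀ m ∈ A, f m ∈ B ∧ g (f m) = m := by
    intro m hm
    obtain ⟨hcard, hmem, hsum⟩ := hm
    obtain ⟨e0, e1, e2⟩ := count_data m hmem
    rw [hsum] at e0 e1
    simp only [hν₁, Matrix.cons_val_zero, Matrix.cons_val_one, Matrix.head_cons] at e0 e1
    have E0 : ((m.count r1 + m.count r3 + 2 * m.count r4 + 3 * m.count r5
        + 3 * m.count r6 : ℕ) : ℤ) = (a : ℤ) + 3 * b - 3 := by
      have : (((m.count r1 + m.count r3 + 2 * m.count r4 + 3 * m.count r5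
          + 3 * m.count r6 : ℕ) : ℤ) : ℚ) = (((a : ℤ) + 3 * b - 3 : ℤ) : ℚ) := by
        push_cast
        push_cast at e0
        linarith
      exact_mod_cast this
    have E1 : ((m.count r2 + m.count r3 + m.count r4 + m.count r5
        + 2 * m.count r6 : ℕ) : ℤ) = (a : ℤ) + 2 * b - 1 := by
      have : (((m.count r2 + m.count r3 + m.count r4 + m.count r5
          + 2 * m.count r6 : ℕ) : ℤ) : ℚ) = (((a : ℤ) + 2 * b - 1 : ℤ) : ℚ) := by
        push_cast
        push_cast at e1
        linarith
      exact_mod_cast this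
    have h6 : b + 1 ≤ m.count r6 := by omega
    have hrep : Multiset.replicate (b + 1) r6 ≤ m :=
      (Multiset.le_count_iff_replicate_le).1 h6
    have hsplit : m - Multiset.replicate (b + 1) r6 + Multiset.replicate (b + 1) r6 = m :=
      tsub_add_cancel_of_le hrep
    have hsum' : (m - Multiset.replicate (b + 1) r6).sum = ν₁ - (b + 1) • r6 := by
      have := congrArg Multiset.sum hsplit
      rw [Multiset.sum_add, Multiset.sum_replicate, hsum] at this
      exact eq_sub_of_add_eq this
    have hcard' : Multiset.card (m - Multiset.replicate (b + 1) r6) = k - (b + 1) := by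
      have := congrArg Multiset.card hsplit
      rw [Multiset.card_add, Multiset.card_replicate, hcard] at this
      omega
    have hkb : b + 1 ≤ k := by omega
    have hgf : g (f m) = m := by
      simp only [hf, hg, add_tsub_cancel_right, hsplit]
    refine ⟨⟨?_, ?_, ?_⟩, hgf⟩
    · simp only [hf, Multiset.card_add, Multiset.card_replicate, hcard']
      omega
    · intro x hx
      rcases Multiset.mem_add.1 hx with hx | hx
      · exact hmem x (Multiset.mem_of_le tsub_le_self hx)
      · rw [Multiset.eq_of_mem_replicate hx]; exact r2_mem
    · simp only [hf, Multiset.sum_add, Multiset.sum_replicate, hsum']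
      funext i
      fin_cases i <;>
        · simp only [hν₁, hν₂, Pi.add_apply, Pi.sub_apply, Pi.smul_apply, smul_eq_mul,
            nsmul_eq_mul, r2, r6, Matrix.cons_val_zero, Matrix.cons_val_one, Matrix.head_cons]
          push_cast
          simp only [Pi.mul_apply, Pi.add_apply, Pi.one_apply, Pi.natCast_apply,
            Matrix.cons_val_zero, Matrix.cons_val_one, Matrix.head_cons]
          ring
  -- backward direction
  have bwd : ∀ m ∈ B, g m ∈ A ∧ f (g m) = m := by
    intro m hm
    obtain ⟨hcard, hmem, hsum⟩ := hm
    obtain ⟨e0, e1, e2⟩ := count_data m hmem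
    rw [hsum] at e0 e1
    simp only [hν₂, Matrix.cons_val_zero, Matrix.cons_val_one, Matrix.head_cons] at e0 e1
    have E0 : ((m.count r1 + m.count r3 + 2 * m.count r4 + 3 * m.count r5
        + 3 * m.count r6 : ℕ) : ℤ) = (a : ℤ) - 6 := by
      have : (((m.count r1 + m.count r3 + 2 * m.count r4 + 3 * m.count r5
          + 3 * m.count r6 : ℕ) : ℤ) : ℚ) = (((a : ℤ) - 6 : ℤ) : ℚ) := by
        push_cast
        push_cast at e0
        linarith
      exact_mod_cast this
    have E1 : ((m.count r2 + m.count r3 + m.count r4 + m.count r5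
        + 2 * m.count r6 : ℕ) : ℤ) = (a : ℤ) + b - 2 := by
      have : (((m.count r2 + m.count r3 + m.count r4 + m.count r5
          + 2 * m.count r6 : ℕ) : ℤ) : ℚ) = (((a : ℤ) + b - 2 : ℤ) : ℚ) := by
        push_cast
        push_cast at e1
        linarith
      exact_mod_cast this
    have h2 : b + 1 ≤ m.count r2 := by omega
    have hrep : Multiset.replicate (b + 1) r2 ≤ m :=
      (Multiset.le_count_iff_replicate_le).1 h2
    have hsplit : m - Multiset.replicate (b + 1) r2 + Multiset.replicate (b + 1) r2 = m :=
      tsub_add_cancel_of_le hrep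
    have hsum' : (m - Multiset.replicate (b + 1) r2).sum = ν₂ - (b + 1) • r2 := by
      have := congrArg Multiset.sum hsplit
      rw [Multiset.sum_add, Multiset.sum_replicate, hsum] at this
      exact eq_sub_of_add_eq this
    have hcard' : Multiset.card (m - Multiset.replicate (b + 1) r2) = k - (b + 1) := by
      have := congrArg Multiset.card hsplit
      rw [Multiset.card_add, Multiset.card_replicate, hcard] at this
      omega
    have hkb : b + 1 ≤ k := by omega
    have hfg : f (g m) = m := by
      simp only [hf, hg, add_tsub_cancel_right, hsplit]
    refine ⟨⟨?_, ?_, ?_⟩, hfg⟩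
    · simp only [hg, Multiset.card_add, Multiset.card_replicate, hcard']
      omega
    · intro x hx
      rcases Multiset.mem_add.1 hx with hx | hx
      · exact hmem x (Multiset.mem_of_le tsub_le_self hx)
      · rw [Multiset.eq_of_mem_replicate hx]; exact r6_mem
    · simp only [hg, Multiset.sum_add, Multiset.sum_replicate, hsum']
      funext i
      fin_cases i <;>
        · simp only [hν₁, hν₂, Pi.add_apply, Pi.sub_apply, Pi.smul_apply, smul_eq_mul,
            nsmul_eq_mul, r2, r6, Matrix.cons_val_zero, Matrix.cons_val_one, Matrix.head_cons]
          push_cast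
          simp only [Pi.mul_apply, Pi.add_apply, Pi.one_apply, Pi.natCast_apply,
            Matrix.cons_val_zero, Matrix.cons_val_one, Matrix.head_cons]
          ring
  have himg : f '' A = B := by
    ext y
    constructor
    · rintro ⟨m, hm, rfl⟩
      exact (fwd m hm).1
    · intro hy
      exact ⟨g y, (bwd y hy).1, (bwd y hy).2⟩
  have hinj : Set.InjOn f A := by
    intro m₁ h₁ m₂ h₂ he
    rw [← (fwd m₁ h₁).2, ← (fwd m₂ h₂).2, he]
  show Set.ncard A = Set.ncard B
  rw [← himg, Set.ncard_image_of_injOn hinj]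


-- For `λ = aω₁ + bω₂` with `a ≥ 6`, `0 ≤ b ≤ 2` and `k ≤ a + b - 2`:
-- `P_k(s₁·λ - ω₁) = P_k(s₁s₂·λ - ω₁)`, where `·` is the dot action `u·λ = u(λ+ρ) - ρ`.
theorem statement15 (a b : ℕ) (ha : 6 ≤ a) (hb : b ≤ 2) (k : ℕ)
    (hk : (k : ℤ) ≤ (a : ℤ) + (b : ℤ) - 2) :
    PG k (sG 0 ((a : ℚ) • ω₁G + (b : ℚ) • ω₂G + ρG) - ρG - ω₁G) =
      PG k (sG 0 (sG 1 ((a : ℚ) • ω₁G + (b : ℚ) • ω₂G + ρG)) - ρG - ω₁G) := by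
  have hv1 : sG 0 ((a : ℚ) • ω₁G + (b : ℚ) • ω₂G + ρG) - ρG - ω₁G
      = ![(a : ℚ) + 3 * b - 3, (a : ℚ) + 2 * b - 1] := by
    funext i
    fin_cases i <;>
      · simp [sG, CG, ω₁G, ω₂G, rho_eq, Fin.sum_univ_succ, Pi.single_apply,
          Matrix.vecHead, Matrix.vecTail, Function.comp]
        ring
  have hv2 : sG 0 (sG 1 ((a : ℚ) • ω₁G + (b : ℚ) • ω₂G + ρG)) - ρG - ω₁G
      = ![(a : ℚ) - 6, (a : ℚ) + b - 2] := by
    funext i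
    fin_cases i <;>
      · simp [sG, CG, ω₁G, ω₂G, rho_eq, Fin.sum_univ_succ, Pi.single_apply,
          Matrix.vecHead, Matrix.vecTail, Function.comp]
        ring
  rw [hv1, hv2]
  exact PG_shift a b k hk

end
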